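/- arXiv:2008.09107 — 4 statements merged into one kernel-verified Lean document; each statement's English description precedes it below -/
import Mathlib

section
/- Let D be a finite digraph with capacity x ∈ ℝ₊^E, let v ∈ V−r, and let z ≤ x be an r→v flow of amount λ_x(v). Define y by y(e) = z(e) for edges e entering v and y(e) = x(e) otherwise. Then λ_y(u) = λ_x(u) for every u ∈ V−r. -/
attribute [local instance] Classical.propDecidable

/-- A finite digraph: edges `E` with tail and head maps (parallel edges allowed). -/
structure Digraph' (V E : Type) where
  tail : E → V
  head : E → V

namespace Digraph'

variable {V E : Type} [Fintype V] [Fintype E]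

/-- `es` is a directed walk from `r` to `v`. -/
def IsWalk (D : Digraph' V E) : V → V → List E → Prop
  | r, v, [] => r = v
  | r, v, e :: es => D.tail e = r ∧ D.IsWalk (D.head e) v es

/-- `es` is a directed path from `r` to `v` using only edges of `F`. -/
def IsPathIn (D : Digraph' V E) (F : Set E) (r v : V) (es : List E) : Prop :=
  D.IsWalk r v es ∧ (∀ e ∈ es, e ∈ F) ∧ (r :: es.map D.head).Nodup

/-- The members of a list of paths are pairwise edge-disjoint. -/
def EdgeDisjoint (P : List (List E)) : Prop :=
  P.Pairwise (fun p q => ∀ e, e ∈ p → e ∉ q)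

/-- The maximum number of pairwise edge-disjoint `r → v` paths inside `F`. -/
noncomputable def lam (D : Digraph' V E) (F : Set E) (r v : V) : ℕ :=
  sSup {k | ∃ P : List (List E), P.length = k ∧ (∀ p ∈ P, D.IsPathIn F r v p) ∧
    EdgeDisjoint P}

/-- The set of edges of `F` whose head is `v`. -/
def inEdges (D : Digraph' V E) (F : Set E) (v : V) : Set E := {e ∈ F | D.head e = v}

/-- The in-degree of `v` in the subgraph `F`. -/
noncomputable def indeg (D : Digraph' V E) (F : Set E) (v : V) : ℕ :=
  (D.inEdges F v).ncard

/-- `I` arises as the set of last edges of a system of pairwise edge-disjoint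
`r → v` paths in `F` (membership in the gammoid `G_F(v)`). -/
def InGammoid (D : Digraph' V E) (F : Set E) (r v : V) (I : Set E) : Prop :=
  ∃ P : List (List E), (∀ p ∈ P, D.IsPathIn F r v p) ∧ EdgeDisjoint P ∧
    I = {e | ∃ p ∈ P, p.getLast? = some e}

/-- `F` is an `r`-flame: the in-degree of each `v ≠ r` equals λ_F(r,v). -/
def IsFlame (D : Digraph' V E) (r : V) (F : Set E) : Prop :=
  ∀ v, v ≠ r → D.indeg F v = D.lam F r v

/-- Total of `x` on the in-edges of `v`. -/
noncomputable def inflow (D : Digraph' V E) (x : E → ℝ) (v : V) : ℝ :=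
  ∑ e, if D.head e = v then x e else 0

/-- Total of `x` on the out-edges of `v`. -/
noncomputable def outflow (D : Digraph' V E) (x : E → ℝ) (v : V) : ℝ :=
  ∑ e, if D.tail e = v then x e else 0

/-- Total of `x` on the edges entering the vertex set `W`. -/
noncomputable def rhoSet (D : Digraph' V E) (x : E → ℝ) (W : Set V) : ℝ :=
  ∑ e, if D.head e ∈ W ∧ D.tail e ∉ W then x e else 0

/-- `x` is a (nonnegative) `r → v` flow. -/
def IsFlow (D : Digraph' V E) (r v : V) (x : E → ℝ) : Prop :=
  (∀ e, 0 ≤ x e) ∧ (∀ u, u ≠ r → u ≠ v → D.inflow x u = D.outflow x u) ∧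
    D.inflow x r = 0 ∧ D.outflow x v = 0

/-- The flow-connectivity from `r` to `v` under capacity `c`. -/
noncomputable def lamF (D : Digraph' V E) (r v : V) (c : E → ℝ) : ℝ :=
  sSup {a | ∃ x, D.IsFlow r v x ∧ x ≤ c ∧ D.outflow x r = a}

/-- Characteristic vector of an edge. -/
noncomputable def chi (e : E) : E → ℝ := fun e' => if e' = e then 1 else 0

/-- Restriction of `x` to the in-edges of `v` (zero elsewhere). -/
noncomputable def restrictIn (D : Digraph' V E) (v : V) (x : E → ℝ) : E → ℝ :=
  fun e => if D.head e = v then x e else 0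

/-- The polygammoid `G_c(v)`: restrictions to the in-edges of `v`
of `r → v` flows bounded by `c`. -/
def polygammoid (D : Digraph' V E) (r v : V) (c : E → ℝ) : Set (E → ℝ) :=
  {s | ∃ x, D.IsFlow r v x ∧ x ≤ c ∧ D.restrictIn v x = s}

/-- `D` has no parallel edges. -/
def NoParallel (D : Digraph' V E) : Prop :=
  ∀ e e', D.tail e = D.tail e' → D.head e = D.head e' → e = e'

/-- `es` is a directed cycle. -/
def IsCycle (D : Digraph' V E) (es : List E) : Prop :=
  es ≠ [] ∧ ∃ u, D.IsWalk u u es ∧ (es.map D.head).Nodup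

/-- Characteristic vector of a list of edges. -/
noncomputable def charVec (es : List E) : E → ℝ :=
  fun e => ((es.filter (fun e' => e' = e)).length : ℝ)

set_option linter.unusedSectionVars false

section Aux

variable (D : Digraph' V E)

lemma inflow_r_zero (r : V) (hr : ∀ e, D.head e ≠ r) (g : E → ℝ) : D.inflow g r = 0 := by
  unfold inflow
  exact Finset.sum_eq_zero fun e _ => by simp [hr e]

lemma tail_zero_of_outflow_zero (t : V) (g : E → ℝ) (h0 : ∀ e, 0 ≤ g e)
    (ht : D.outflow g t = 0) : ∀ e, D.tail e = t → g e = 0 := by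
  intro e he
  have h := (Finset.sum_eq_zero_iff_of_nonneg (by
    intro e' _
    by_cases h' : D.tail e' = t <;> simp [h', h0 e'])).1 ht e (Finset.mem_univ e)
  simpa [he] using h

lemma inflow_comb (f p : E → ℝ) (δ : ℝ) (w : V) :
    D.inflow (fun e => f e + δ * p e) w = D.inflow f w + δ * D.inflow p w := by
  unfold inflow
  rw [Finset.mul_sum, ← Finset.sum_add_distrib]
  exact Finset.sum_congr rfl fun e _ => by split_ifs <;> ring

lemma outflow_comb (f p : E → ℝ) (δ : ℝ) (w : V) :
    D.outflow (fun e => f e + δ * p e) w = D.outflow f w + δ * D.outflow p w := by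
  unfold outflow
  rw [Finset.mul_sum, ← Finset.sum_add_distrib]
  exact Finset.sum_congr rfl fun e _ => by split_ifs <;> ring

lemma inflow_chi (e0 : E) (w : V) :
    D.inflow (fun e' => if e' = e0 then (1:ℝ) else 0) w
      = if w = D.head e0 then (1:ℝ) else 0 := by
  unfold inflow
  have : ∀ e, (if D.head e = w then (if e = e0 then (1:ℝ) else 0) else 0)
      = if e = e0 then (if w = D.head e0 then (1:ℝ) else 0) else 0 := by
    intro e
    by_cases h : e = e0 <;> simp [h, eq_comm]
  rw [Finset.sum_congr rfl fun e _ => this e, Finset.sum_ite_eq' Finset.univ e0]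
  simp

lemma outflow_chi (e0 : E) (w : V) :
    D.outflow (fun e' => if e' = e0 then (1:ℝ) else 0) w
      = if w = D.tail e0 then (1:ℝ) else 0 := by
  unfold outflow
  have : ∀ e, (if D.tail e = w then (if e = e0 then (1:ℝ) else 0) else 0)
      = if e = e0 then (if w = D.tail e0 then (1:ℝ) else 0) else 0 := by
    intro e
    by_cases h : e = e0 <;> simp [h, eq_comm]
  rw [Finset.sum_congr rfl fun e _ => this e, Finset.sum_ite_eq' Finset.univ e0]
  simp

lemma sum_inflow (f : E → ℝ) (W : Set V) :
    ∑ w ∈ Finset.univ.filter (· ∈ W), D.inflow f w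
      = ∑ e, if D.head e ∈ W then f e else 0 := by
  unfold inflow
  rw [Finset.sum_comm]
  refine Finset.sum_congr rfl fun e _ => ?_
  rw [Finset.sum_ite_eq (Finset.univ.filter (· ∈ W)) (D.head e) (fun _ => f e)]
  simp

end Aux

section Aux2
set_option linter.unusedSectionVars false
variable (D : Digraph' V E)

lemma sum_outflow (f : E → ℝ) (W : Set V) :
    ∑ w ∈ Finset.univ.filter (· ∈ W), D.outflow f w
      = ∑ e, if D.tail e ∈ W then f e else 0 := by
  unfold outflow
  rw [Finset.sum_comm]
  refine Finset.sum_congr rfl fun e _ => ?_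
  rw [Finset.sum_ite_eq (Finset.univ.filter (· ∈ W)) (D.tail e) (fun _ => f e)]
  simp

lemma excess_eq (r t : V) (hr : ∀ e, D.head e ≠ r) (htr : t ≠ r) (f : E → ℝ)
    (hf : D.IsFlow r t f) (w : V) :
    D.inflow f w - D.outflow f w
      = (if w = t then D.outflow f r else 0) - (if w = r then D.outflow f r else 0) := by
  by_cases hwr : w = r
  · subst hwr
    rw [D.inflow_r_zero w hr f]
    simp [Ne.symm htr]
  by_cases hwt : w = t
  · subst hwt
    have htotal : ∑ u : V, (D.inflow f u - D.outflow f u) = 0 := by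
      rw [Finset.sum_sub_distrib]
      have h1 : ∑ u : V, D.inflow f u = ∑ e, f e := by
        have := D.sum_inflow f Set.univ
        simpa using this
      have h2 : ∑ u : V, D.outflow f u = ∑ e, f e := by
        have := D.sum_outflow f Set.univ
        simpa using this
      rw [h1, h2, sub_self]
    have herase : ∑ u ∈ Finset.univ.erase w, (D.inflow f u - D.outflow f u)
        = - D.outflow f r := by
      rw [Finset.sum_eq_single_of_mem r (Finset.mem_erase.2 ⟨Ne.symm htr, Finset.mem_univ r⟩)]
      · rw [D.inflow_r_zero r hr f]; ring
      · intro u hu hur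
        have := hf.2.1 u hur (Finset.mem_erase.1 hu).1
        linarith
    have hadd := Finset.add_sum_erase Finset.univ (fun u => D.inflow f u - D.outflow f u) (Finset.mem_univ w)
    rw [htotal, herase] at hadd
    have hadd' : D.inflow f w - D.outflow f w + -D.outflow f r = 0 := hadd
    simp [hwr]
    linarith [hadd']
  · have := hf.2.1 w hwr hwt
    simp [hwr, hwt]
    linarith

lemma netw (r t : V) (hr : ∀ e, D.head e ≠ r) (htr : t ≠ r) (f : E → ℝ)
    (hf : D.IsFlow r t f) (W : Set V) (hrW : r ∉ W) (htW : t ∈ W) :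
    D.outflow f r
      = ∑ e, ((if D.head e ∈ W then f e else 0) - (if D.tail e ∈ W then f e else 0)) := by
  rw [Finset.sum_sub_distrib, ← D.sum_inflow f W, ← D.sum_outflow f W,
    ← Finset.sum_sub_distrib]
  rw [Finset.sum_congr rfl fun w hw => D.excess_eq r t hr htr f hf w]
  rw [Finset.sum_sub_distrib]
  rw [Finset.sum_ite_eq' (Finset.univ.filter (· ∈ W)) t (fun _ => D.outflow f r)]
  rw [Finset.sum_ite_eq' (Finset.univ.filter (· ∈ W)) r (fun _ => D.outflow f r)]
  simp [htW, hrW]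

lemma weak_duality (r t : V) (hr : ∀ e, D.head e ≠ r) (htr : t ≠ r) (f c : E → ℝ)
    (hf : D.IsFlow r t f) (hfc : f ≤ c) (W : Set V) (hrW : r ∉ W) (htW : t ∈ W) :
    D.outflow f r ≤ D.rhoSet c W := by
  rw [D.netw r t hr htr f hf W hrW htW]
  unfold rhoSet
  refine Finset.sum_le_sum fun e _ => ?_
  have h0 := hf.1 e
  have h1 := hfc e
  by_cases h2 : D.head e ∈ W <;> by_cases h3 : D.tail e ∈ W <;> simp [h2, h3] <;> linarith

end Aux2

section Aux3
set_option linter.unusedSectionVars false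
variable (D : Digraph' V E)

/-- Residual step relation for augmenting paths, forbidding steps out of the sink `t`. -/
def resStep (t : V) (c f : E → ℝ) : V → V → Prop := fun a b =>
  a ≠ t ∧ ((∃ e, D.tail e = a ∧ D.head e = b ∧ f e < c e) ∨
    (∃ e, D.tail e = b ∧ D.head e = a ∧ 0 < f e))

lemma pert (r t : V) (c f : E → ℝ) (hft : ∀ e, D.tail e = t → f e = 0) (b : V)
    (h : Relation.ReflTransGen (D.resStep t c f) r b) :
    ∃ p : E → ℝ, (∀ e, D.tail e = t → p e = 0) ∧ (∀ e, 0 < p e → f e < c e) ∧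
      (∀ e, p e < 0 → 0 < f e) ∧
      ∀ w, D.inflow p w - D.outflow p w
        = (if w = b then (1:ℝ) else 0) - (if w = r then (1:ℝ) else 0) := by
  induction h with
  | refl =>
    refine ⟨fun _ => 0, fun e _ => rfl, fun e h => absurd h (by norm_num),
      fun e h => absurd h (by norm_num), fun w => ?_⟩
    have h1 : D.inflow (fun _ => (0:ℝ)) w = 0 := Finset.sum_eq_zero fun e _ => by split_ifs <;> rfl
    have h2 : D.outflow (fun _ => (0:ℝ)) w = 0 := Finset.sum_eq_zero fun e _ => by split_ifs <;> rfl
    rw [h1, h2]; ring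
  | @tail b b' hrb hstep ih =>
    obtain ⟨p, hp1, hp2, hp3, hp4⟩ := ih
    obtain ⟨hbt, hcase⟩ := hstep
    rcases hcase with ⟨e0, he1, he2, he3⟩ | ⟨e0, he1, he2, he3⟩
    · -- forward edge e0 : b → b'
      refine ⟨fun e => p e + 1 * (if e = e0 then (1:ℝ) else 0), ?_, ?_, ?_, ?_⟩
      · intro e he
        have : e ≠ e0 := fun hh => hbt (by rw [← he1, ← hh, he])
        simp [this, hp1 e he]
      · intro e hpe
        by_cases hh : e = e0
        · rw [hh]; exact he3
        · simp [hh] at hpe; exact hp2 e hpe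
      · intro e hpe
        by_cases hh : e = e0
        · rw [hh] at hpe ⊢; simp at hpe; exact hp3 e0 (by linarith)
        · simp [hh] at hpe; exact hp3 e hpe
      · intro w
        rw [D.inflow_comb p _ 1 w, D.outflow_comb p _ 1 w, D.inflow_chi e0 w,
          D.outflow_chi e0 w, he1, he2]
        have := hp4 w
        split_ifs at this ⊢ <;> linarith
    · -- backward edge e0 : b' → b
      have hb't : D.tail e0 ≠ t := fun hh => by
        have := hft e0 hh; linarith
      refine ⟨fun e => p e + (-1) * (if e = e0 then (1:ℝ) else 0), ?_, ?_, ?_, ?_⟩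
      · intro e he
        have : e ≠ e0 := fun hh => hb't (by rw [← hh, he])
        simp [this, hp1 e he]
      · intro e hpe
        by_cases hh : e = e0
        · rw [hh] at hpe ⊢; simp at hpe; exact hp2 e0 (by linarith)
        · simp [hh] at hpe; exact hp2 e hpe
      · intro e hpe
        by_cases hh : e = e0
        · rw [hh]; exact he3
        · simp [hh] at hpe; exact hp3 e hpe
      · intro w
        rw [D.inflow_comb p _ (-1) w, D.outflow_comb p _ (-1) w, D.inflow_chi e0 w,
          D.outflow_chi e0 w, he1, he2]
        have := hp4 w
        split_ifs at this ⊢ <;> linarith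

lemma exists_delta (c f p : E → ℝ) (h0 : ∀ e, 0 ≤ f e) (hfc : f ≤ c)
    (h1 : ∀ e, 0 < p e → f e < c e) (h2 : ∀ e, p e < 0 → 0 < f e) :
    ∃ δ : ℝ, 0 < δ ∧ ∀ e, 0 ≤ f e + δ * p e ∧ f e + δ * p e ≤ c e := by
  classical
  set g : E → ℝ := fun e => if 0 < p e then (c e - f e) / p e else
    if p e < 0 then f e / (-p e) else 1 with hg
  have hgpos : ∀ e, 0 < g e := by
    intro e
    by_cases hp : 0 < p e
    · simp only [hg, hp, if_true]
      exact div_pos (by linarith [h1 e hp]) hp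
    · by_cases hn : p e < 0
      · simp only [hg, hp, hn, if_false, if_true]
        exact div_pos (h2 e hn) (by linarith)
      · simp [hg, hp, hn]
  have key : ∀ (δ : ℝ) (e : E), 0 < δ → δ ≤ g e → 0 ≤ f e + δ * p e ∧ f e + δ * p e ≤ c e := by
    intro δ e hδ hδg
    by_cases hp : 0 < p e
    · simp only [hg, hp, if_true] at hδg
      have := (le_div_iff₀ hp).1 hδg
      constructor
      · nlinarith [h0 e]
      · nlinarith
    · by_cases hn : p e < 0
      · simp only [hg, hp, hn, if_false, if_true] at hδg
        have hneg : 0 < -p e := by linarith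
        have := (le_div_iff₀ hneg).1 hδg
        constructor
        · nlinarith
        · nlinarith [hfc e]
      · have hz : p e = 0 := le_antisymm (not_lt.1 hp) (not_lt.1 hn)
        rw [hz]
        constructor
        · simpa using h0 e
        · simpa using hfc e
  cases isEmpty_or_nonempty E with
  | inl hE => exact ⟨1, one_pos, fun e => isEmptyElim e⟩
  | inr hE =>
    refine ⟨Finset.univ.inf' Finset.univ_nonempty g, ?_, fun e => ?_⟩
    · rw [Finset.lt_inf'_iff]
      exact fun e _ => hgpos e
    · exact key _ e (by rw [Finset.lt_inf'_iff]; exact fun e _ => hgpos e)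
        (Finset.inf'_le g (Finset.mem_univ e))

end Aux3

section Aux4
set_option linter.unusedSectionVars false
variable (D : Digraph' V E)

lemma maxflow_cut (r t : V) (hr : ∀ e, D.head e ≠ r) (htr : t ≠ r) (c f : E → ℝ)
    (hf : D.IsFlow r t f) (hfc : f ≤ c)
    (hmax : ∀ g, D.IsFlow r t g → g ≤ c → D.outflow g r ≤ D.outflow f r) :
    ∃ A : Set V, r ∉ A ∧ t ∈ A ∧
      (∀ e, D.tail e ∉ A → D.head e ∈ A → f e = c e) ∧
      (∀ e, D.tail e ∈ A → D.head e ∉ A → f e = 0) := by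
  have hft : ∀ e, D.tail e = t → f e = 0 :=
    D.tail_zero_of_outflow_zero t f hf.1 hf.2.2.2
  set A : Set V := {w | ¬ Relation.ReflTransGen (D.resStep t c f) r w} with hA
  have hrA : r ∉ A := fun h => h Relation.ReflTransGen.refl
  have htA : t ∈ A := by
    intro hreach
    obtain ⟨p, hp1, hp2, hp3, hp4⟩ := D.pert r t c f hft t hreach
    obtain ⟨δ, hδ, hδe⟩ := exists_delta c f p hf.1 hfc hp2 hp3
    have hgflow : D.IsFlow r t (fun e => f e + δ * p e) := by
      refine ⟨fun e => (hδe e).1, ?_, ?_, ?_⟩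
      · intro u hur hut
        rw [D.inflow_comb f p δ u, D.outflow_comb f p δ u]
        have h1 := hf.2.1 u hur hut
        have h2 := hp4 u
        simp [hur, hut] at h2
        have h2' : D.inflow p u = D.outflow p u := by linarith
        rw [h1, h2']
      · exact D.inflow_r_zero r hr _
      · refine Finset.sum_eq_zero fun e _ => ?_
        by_cases he : D.tail e = t
        · simp [he, hft e he, hp1 e he]
        · simp [he]
    have hgle : (fun e => f e + δ * p e) ≤ c := fun e => (hδe e).2
    have hval : D.outflow (fun e => f e + δ * p e) r = D.outflow f r + δ := by
      rw [D.outflow_comb f p δ r]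
      have h2 := hp4 r
      have h3 : D.inflow p r = 0 := D.inflow_r_zero r hr p
      simp [Ne.symm htr, h3] at h2
      have h4 : D.outflow p r = 1 := by linarith
      rw [h4]; ring
    have := hmax _ hgflow hgle
    rw [hval] at this
    linarith
  refine ⟨A, hrA, htA, ?_, ?_⟩
  · intro e hte hhe
    by_contra hne
    have hlt : f e < c e := lt_of_le_of_ne (hfc e) hne
    have htet : D.tail e ≠ t := by
      intro hh
      have h' := not_not.1 hte
      rw [hh] at h'
      exact htA h'
    have : Relation.ReflTransGen (D.resStep t c f) r (D.head e) :=
      Relation.ReflTransGen.tail (not_not.1 hte) ⟨htet, Or.inl ⟨e, rfl, rfl, hlt⟩⟩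
    exact hhe this
  · intro e hte hhe
    by_contra hne
    have hpos : 0 < f e := lt_of_le_of_ne (hf.1 e) (Ne.symm hne)
    have hhet : D.head e ≠ t := by
      intro hh
      have h' := not_not.1 hhe
      rw [hh] at h'
      exact htA h'
    have : Relation.ReflTransGen (D.resStep t c f) r (D.tail e) :=
      Relation.ReflTransGen.tail (not_not.1 hhe) ⟨hhet, Or.inr ⟨e, rfl, rfl, hpos⟩⟩
    exact hte this

lemma zero_flow (r t : V) : D.IsFlow r t (fun _ => 0) := by
  refine ⟨fun e => le_refl 0, fun u _ _ => ?_, ?_, ?_⟩ <;>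
    simp [inflow, outflow]

lemma attain (r t : V) (c : E → ℝ) (hc0 : ∀ e, 0 ≤ c e) :
    ∃ f, D.IsFlow r t f ∧ f ≤ c ∧ D.outflow f r = D.lamF r t c := by
  classical
  set K : Set (E → ℝ) := {f | D.IsFlow r t f ∧ f ≤ c} with hK
  have hcont_in : ∀ w, Continuous fun f : E → ℝ => D.inflow f w := by
    intro w
    unfold inflow
    refine continuous_finset_sum _ fun e _ => ?_
    by_cases h : D.head e = w <;> simp [h]
    · exact continuous_apply e
    · exact continuous_const
  have hcont_out : ∀ w, Continuous fun f : E → ℝ => D.outflow f w := by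
    intro w
    unfold outflow
    refine continuous_finset_sum _ fun e _ => ?_
    by_cases h : D.tail e = w <;> simp [h]
    · exact continuous_apply e
    · exact continuous_const
  have hKclosed : IsClosed K := by
    have e1 : K = ({f : E → ℝ | ∀ e, 0 ≤ f e} ∩
        {f | ∀ u, u ≠ r → u ≠ t → D.inflow f u = D.outflow f u} ∩
        {f | D.inflow f r = 0} ∩ {f | D.outflow f t = 0} ∩
        {f | ∀ e, f e ≤ c e}) := by
      ext f
      constructor
      · rintro ⟨⟨a, b, d, g⟩, h⟩
        exact ⟨⟨⟨⟨a, b⟩, d⟩, g⟩, h⟩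
      · rintro ⟨⟨⟨⟨a, b⟩, d⟩, g⟩, h⟩
        exact ⟨⟨a, b, d, g⟩, h⟩
    rw [e1]
    refine IsClosed.inter (IsClosed.inter (IsClosed.inter (IsClosed.inter ?_ ?_) ?_) ?_) ?_
    · have : {f : E → ℝ | ∀ e, 0 ≤ f e} = ⋂ e, {f : E → ℝ | 0 ≤ f e} := by
        ext f; simp
      rw [this]
      exact isClosed_iInter fun e => isClosed_le continuous_const (continuous_apply e)
    · have : {f : E → ℝ | ∀ u, u ≠ r → u ≠ t → D.inflow f u = D.outflow f u}
          = ⋂ u, {f : E → ℝ | u ≠ r → u ≠ t → D.inflow f u = D.outflow f u} := by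
        ext f; simp
      rw [this]
      refine isClosed_iInter fun u => ?_
      by_cases h1 : u = r
      · have : {f : E → ℝ | u ≠ r → u ≠ t → D.inflow f u = D.outflow f u} = Set.univ := by
          ext f; simp [h1]
        rw [this]; exact isClosed_univ
      by_cases h2 : u = t
      · have : {f : E → ℝ | u ≠ r → u ≠ t → D.inflow f u = D.outflow f u} = Set.univ := by
          ext f; simp [h1, h2]
        rw [this]; exact isClosed_univ
      · have : {f : E → ℝ | u ≠ r → u ≠ t → D.inflow f u = D.outflow f u}
            = {f : E → ℝ | D.inflow f u = D.outflow f u} := by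
          ext f; simp [h1, h2]
        rw [this]
        exact isClosed_eq (hcont_in u) (hcont_out u)
    · exact isClosed_eq (hcont_in r) continuous_const
    · exact isClosed_eq (hcont_out t) continuous_const
    · have : {f : E → ℝ | ∀ e, f e ≤ c e} = ⋂ e, {f : E → ℝ | f e ≤ c e} := by
        ext f; simp
      rw [this]
      exact isClosed_iInter fun e => isClosed_le (continuous_apply e) continuous_const
  have hKsub : K ⊆ Set.Icc (fun _ => 0) c := by
    rintro f ⟨hf, hfc⟩
    exact ⟨fun e => hf.1 e, hfc⟩
  have hKcompact : IsCompact K :=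
    IsCompact.of_isClosed_subset isCompact_Icc hKclosed hKsub
  have hKne : K.Nonempty := ⟨fun _ => 0, D.zero_flow r t, fun e => hc0 e⟩
  set S : Set ℝ := (fun f => D.outflow f r) '' K with hS
  have hSc : IsCompact S := hKcompact.image (hcont_out r)
  have hSne : S.Nonempty := hKne.image _
  have hmem : sSup S ∈ S := hSc.sSup_mem hSne
  obtain ⟨f, hfK, hfval⟩ := hmem
  have hfval' : D.outflow f r = sSup S := hfval
  refine ⟨f, hfK.1, hfK.2, ?_⟩
  rw [hfval']
  have hSeq : S = {a | ∃ g, D.IsFlow r t g ∧ g ≤ c ∧ D.outflow g r = a} := by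
    ext a
    simp only [hS, Set.mem_image, hK, Set.mem_setOf_eq]
    constructor
    · rintro ⟨g, ⟨h1, h2⟩, h3⟩; exact ⟨g, h1, h2, h3⟩
    · rintro ⟨g, h1, h2, h3⟩; exact ⟨g, ⟨h1, h2⟩, h3⟩
  rw [hSeq]
  rfl

end Aux4

section Aux5
set_option linter.unusedSectionVars false
variable (D : Digraph' V E)

lemma bddAboveS (r t : V) (c : E → ℝ) :
    BddAbove {a : ℝ | ∃ f, D.IsFlow r t f ∧ f ≤ c ∧ D.outflow f r = a} := by
  refine ⟨∑ e, c e, ?_⟩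
  rintro a ⟨f, hf, hfc, rfl⟩
  unfold outflow
  refine Finset.sum_le_sum fun e _ => ?_
  have h1 := hf.1 e
  have h2 := hfc e
  split_ifs <;> linarith

lemma zero_mem (r t : V) (c : E → ℝ) (hc0 : ∀ e, 0 ≤ c e) :
    (0:ℝ) ∈ {a : ℝ | ∃ f, D.IsFlow r t f ∧ f ≤ c ∧ D.outflow f r = a} :=
  ⟨fun _ => 0, D.zero_flow r t, fun e => hc0 e, by simp [outflow]⟩

end Aux5
end Digraph'


open Digraph' in
/-- Replacing the capacities on the in-edges of `v` by the values of a maximum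
`r → v` flow does not change any flow-connectivity from `r`. -/
theorem stmt6 {V E : Type} [Fintype V] [Fintype E] (D : Digraph' V E)
    (hsimple : D.NoParallel) (r : V) (hr : ∀ e, D.head e ≠ r)
    (x : E → ℝ) (hx : ∀ e, 0 ≤ x e) (v : V) (hv : v ≠ r)
    (z : E → ℝ) (hz : D.IsFlow r v z) (hzx : z ≤ x)
    (hzmax : D.outflow z r = D.lamF r v x) :
    ∀ u, u ≠ r →
      D.lamF r u (fun e => if D.head e = v then z e else x e) = D.lamF r u x := by
  intro u hu
  have hy0 : ∀ e, (0:ℝ) ≤ if D.head e = v then z e else x e := by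
    intro e; split_ifs
    · exact hz.1 e
    · exact hx e
  have hzy : ∀ e, z e ≤ if D.head e = v then z e else x e := by
    intro e; split_ifs
    · exact le_refl _
    · exact hzx e
  have hyx : ∀ e, (if D.head e = v then z e else x e) ≤ x e := by
    intro e; split_ifs
    · exact hzx e
    · exact le_refl _
  -- the max-flow cut for z at v under capacity x
  have hmax_z : ∀ g, D.IsFlow r v g → g ≤ x → D.outflow g r ≤ D.outflow z r := by
    intro g h1 h2
    rw [hzmax]
    exact le_csSup (D.bddAboveS r v x) ⟨g, h1, h2, rfl⟩
  obtain ⟨A, hrA, hvA, hAsat, hAzero⟩ := D.maxflow_cut r v hr hv x z hz hzx hmax_z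
  have haux : ∀ e, D.tail e ∉ A → (if D.head e = v then z e else x e) = x e := by
    intro e hte
    by_cases hh : D.head e = v
    · rw [if_pos hh]
      exact hAsat e hte (by rw [hh]; exact hvA)
    · rw [if_neg hh]
  -- a maximum flow for y at u
  obtain ⟨f, hf, hfy, hfval⟩ :=
    D.attain r u (fun e => if D.head e = v then z e else x e) hy0
  have hmax_f : ∀ g, D.IsFlow r u g →
      g ≤ (fun e => if D.head e = v then z e else x e) → D.outflow g r ≤ D.outflow f r := by
    intro g h1 h2
    rw [hfval]
    exact le_csSup (D.bddAboveS r u _) ⟨g, h1, h2, rfl⟩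
  obtain ⟨W, hrW, huW, hWsat, hWzero⟩ :=
    D.maxflow_cut r u hr hu (fun e => if D.head e = v then z e else x e) f hf hfy hmax_f
  -- the value of f equals the capacity of the cut W under y
  have heq : D.outflow f r = D.rhoSet (fun e => if D.head e = v then z e else x e) W := by
    rw [D.netw r u hr hu f hf W hrW huW]
    unfold rhoSet
    refine Finset.sum_congr rfl fun e _ => ?_
    by_cases h1 : D.head e ∈ W <;> by_cases h2 : D.tail e ∈ W <;> simp [h1, h2]
    · exact hWsat e h2 h1
    · exact hWzero e h2 h1
  -- λ_y(u) ≤ λ_x(u)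
  have hle : D.lamF r u (fun e => if D.head e = v then z e else x e) ≤ D.lamF r u x := by
    unfold lamF
    apply csSup_le_csSup (D.bddAboveS r u x)
    · exact ⟨0, D.zero_mem r u _ hy0⟩
    · rintro a ⟨g, h1, h2, h3⟩
      exact ⟨g, h1, fun e => le_trans (h2 e) (hyx e), h3⟩
  -- λ_x(u) ≤ ρ_y(W)
  have hge : D.lamF r u x ≤ D.rhoSet (fun e => if D.head e = v then z e else x e) W := by
    by_cases hvW : v ∈ W
    · -- via the cut W ∪ A
      have hstep1 : D.lamF r u x ≤ D.rhoSet x (W ∪ A) := by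
        unfold lamF
        apply csSup_le ⟨0, D.zero_mem r u x hx⟩
        rintro a ⟨g, h1, h2, rfl⟩
        exact D.weak_duality r u hr hu g x h1 h2 (W ∪ A)
          (fun h => h.elim hrW hrA) (Or.inl huW)
      have hA1 : ∑ w ∈ Finset.univ.filter (· ∈ A \ W), D.inflow z w
          = ∑ e, if D.head e ∈ A \ W then z e else 0 := by
        unfold inflow
        rw [Finset.sum_comm]
        refine Finset.sum_congr rfl fun e _ => ?_
        rw [Finset.sum_ite_eq (Finset.univ.filter (· ∈ A \ W)) (D.head e) (fun _ => z e)]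
        simp
      have hA2 : ∑ w ∈ Finset.univ.filter (· ∈ A \ W), D.outflow z w
          = ∑ e, if D.tail e ∈ A \ W then z e else 0 := by
        unfold outflow
        rw [Finset.sum_comm]
        refine Finset.sum_congr rfl fun e _ => ?_
        rw [Finset.sum_ite_eq (Finset.univ.filter (· ∈ A \ W)) (D.tail e) (fun _ => z e)]
        simp
      have hBcons : (∑ e, if D.head e ∈ A \ W then z e else 0)
          = (∑ e, if D.tail e ∈ A \ W then z e else 0) := by
        rw [← hA1, ← hA2]
        refine Finset.sum_congr rfl fun w hw => ?_
        have hwB : w ∈ A \ W := (Finset.mem_filter.1 hw).2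
        have hwr : w ≠ r := fun h => hrA (h ▸ hwB.1)
        have hwv : w ≠ v := fun h => hwB.2 (h ▸ hvW)
        exact hz.2.1 w hwr hwv
      have hnn : (0:ℝ) ≤ ∑ e, if D.head e ∈ A \ W ∧ D.tail e ∈ W then z e else 0 := by
        refine Finset.sum_nonneg fun e _ => ?_
        split_ifs
        · exact hz.1 e
        · exact le_refl 0
      have hper : ∀ e ∈ (Finset.univ : Finset E),
          (if D.head e ∈ W ∪ A ∧ D.tail e ∉ W ∪ A then x e else 0)
          ≤ ((if D.head e ∈ W ∧ D.tail e ∉ W then (if D.head e = v then z e else x e) else 0)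
            + ((if D.head e ∈ A \ W then z e else 0) - (if D.tail e ∈ A \ W then z e else 0))
            - (if D.head e ∈ A \ W ∧ D.tail e ∈ W then z e else 0)) := by
        intro e _
        have hz0 := hz.1 e
        have hzx' := hzx e
        have hzy' := hzy e
        have hyx' := hyx e
        by_cases h1 : D.head e ∈ W <;> by_cases h2 : D.head e ∈ A <;>
          by_cases h3 : D.tail e ∈ W <;> by_cases h4 : D.tail e ∈ A <;>
          simp only [Set.mem_union, Set.mem_diff, h1, h2, h3, h4, true_and, and_true,
            false_and, and_false, true_or, or_true, false_or, or_false, not_true, not_false_iff,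
            if_true, if_false, not_or, and_self, not_false_eq_true, ite_true, ite_false,
            not_true_eq_false, and_false, false_and] <;>
          first
            | linarith
            | linarith [hAzero e h4 h2]
            | linarith [hAsat e h4 h2]
            | linarith [haux e h4]
      have hsum := Finset.sum_le_sum hper
      simp only [Finset.sum_sub_distrib, Finset.sum_add_distrib] at hsum
      have hfinal : (∑ e, if D.head e ∈ W ∪ A ∧ D.tail e ∉ W ∪ A then x e else 0)
          ≤ ∑ e, if D.head e ∈ W ∧ D.tail e ∉ W then (if D.head e = v then z e else x e) else 0 := by
        linarith [hsum, hBcons, hnn]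
      have hstep2 : D.rhoSet x (W ∪ A)
          ≤ D.rhoSet (fun e => if D.head e = v then z e else x e) W := by
        unfold rhoSet
        refine le_trans (le_of_eq (Finset.sum_congr rfl fun e _ => ?_))
          (le_trans hfinal (le_of_eq (Finset.sum_congr rfl fun e _ => ?_)))
        · by_cases h : D.head e ∈ W ∪ A ∧ D.tail e ∉ W ∪ A <;> simp [h]
        · by_cases h : D.head e ∈ W ∧ D.tail e ∉ W <;> simp [h]
      linarith
    · -- v ∉ W : the two cut capacities agree
      have hstep1 : D.lamF r u x ≤ D.rhoSet x W := by
        unfold lamF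
        apply csSup_le ⟨0, D.zero_mem r u x hx⟩
        rintro a ⟨g, h1, h2, rfl⟩
        exact D.weak_duality r u hr hu g x h1 h2 W hrW huW
      have hstep2 : D.rhoSet x W
          = D.rhoSet (fun e => if D.head e = v then z e else x e) W := by
        unfold rhoSet
        refine Finset.sum_congr rfl fun e _ => ?_
        by_cases h1 : D.head e ∈ W ∧ D.tail e ∉ W
        · have hne : D.head e ≠ v := fun h => hvW (h ▸ h1.1)
          simp [h1, hne]
        · simp [h1]
      linarith
  have hfin : D.rhoSet (fun e => if D.head e = v then z e else x e) W
      = D.lamF r u (fun e => if D.head e = v then z e else x e) := by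
    rw [← heq, hfval]
  linarith
end

section
/- Let D be a finite digraph, r, v ∈ V(D) with r having no in-edges, and let P be a maximum-size family of pairwise edge-disjoint r→v paths in D. Then deleting all in-edges of v not used by paths of P does not decrease λ_D(r,u) for any u ∈ V(D)−r. -/
attribute [local instance] Classical.propDecidable

/-!
By Menger's theorem there is an `r`–`v` cut `X` with exactly `|P| = λ(r, v)` outgoing edges, and
all of them lie on paths of `P`; so every deleted edge enters `v` from outside `X`. Let `W` be an
`r`–`u` cut of the reduced digraph `F`. If `v ∈ W`, no deleted edge leaves `W`. Otherwise
submodularity `d_F(W ∪ X) + d_F(W ∩ X) ≤ d_F(W) + d_F(X)` applies with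
`d_F(X) ≤ |P| ≤ d_F(W ∪ X)` (the paths of `P` survive and `W ∪ X` separates `r` from `v`) and
`d_F(W ∩ X) = d(W ∩ X) ≥ λ(r, u)` (no deleted edge leaves `X`), hence `d_F(W) ≥ λ(r, u)`, and
Menger's theorem for `F` concludes.

Menger's theorem is proved by augmenting paths: edge sets are compared through their excess
(in-degree minus out-degree) at each vertex, and an edge set whose excess is `n` at `b`, `-n` at `a`
and `0` elsewhere splits into `n` edge-disjoint `a`–`b` paths.
-/

namespace Digraph'

open Finset

variable {V E : Type} {D : Digraph' V E} {F G : Set E} {a b : V} {P : List (List E)}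

theorem IsWalk.append {c : V} {xs ys : List E} (hxs : D.IsWalk a b xs) (hys : D.IsWalk b c ys) :
    D.IsWalk a c (xs ++ ys) := by
  induction xs generalizing a with
  | nil => cases hxs; exact hys
  | cons e es ih => exact ⟨hxs.1, ih hxs.2⟩

theorem IsPathIn.tail {e : E} {p : List E} (hp : D.IsPathIn F a b (e :: p)) :
    D.IsPathIn F (D.head e) b p :=
  ⟨hp.1.2, fun x hx => hp.2.1 x (List.mem_cons_of_mem e hx), (List.nodup_cons.mp hp.2.2).2⟩

theorem IsPathIn.nodup {p : List E} (hp : D.IsPathIn F a b p) : p.Nodup :=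
  (List.nodup_cons.mp hp.2.2).2.of_map D.head

theorem IsPathIn.ne_nil {p : List E} (hp : D.IsPathIn F a b p) (hab : a ≠ b) : p ≠ [] := by
  rintro rfl
  exact hab hp.1

theorem IsPathIn.mono {p : List E} (hp : D.IsPathIn F a b p) (hFG : F ⊆ G) :
    D.IsPathIn G a b p :=
  ⟨hp.1, fun e he => hFG (hp.2.1 e he), hp.2.2⟩

theorem IsPathIn.exists_suffix {p : List E} (hp : D.IsPathIn F a b p) {c : V}
    (hc : c ∈ a :: p.map D.head) : ∃ q, D.IsPathIn F c b q := by
  induction p generalizing a with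
  | nil => exact ⟨[], by simp_all⟩
  | cons e p ih =>
    rcases List.mem_cons.mp hc with rfl | hc
    · exact ⟨_, hp⟩
    · exact ih hp.tail hc

theorem IsWalk.exists_isPathIn {es : List E} (hw : D.IsWalk a b es) (hF : ∀ e ∈ es, e ∈ F) :
    ∃ p, D.IsPathIn F a b p := by
  induction es generalizing a with
  | nil => exact ⟨[], hw, by simp, by simp⟩
  | cons e es ih =>
    obtain ⟨p, hp⟩ := ih hw.2 fun x hx => hF x (List.mem_cons_of_mem e hx)
    by_cases ha : a ∈ D.head e :: p.map D.head
    · exact hp.exists_suffix ha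
    · refine ⟨e :: p, ⟨hw.1, hp.1⟩, ?_, List.nodup_cons.mpr ⟨ha, hp.2.2⟩⟩
      intro x hx
      rcases List.mem_cons.mp hx with rfl | hx
      exacts [hF x List.mem_cons_self, hp.2.1 x hx]

def reach (D : Digraph' V E) (F : Set E) (a : V) : Set V :=
  {w | ∃ es, D.IsWalk a w es ∧ ∀ e ∈ es, e ∈ F}

theorem self_mem_reach : a ∈ D.reach F a :=
  ⟨[], rfl, by simp⟩

theorem head_mem_reach {e : E} (he : e ∈ F) (ht : D.tail e ∈ D.reach F a) :
    D.head e ∈ D.reach F a := by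
  obtain ⟨es, hw, hes⟩ := ht
  refine ⟨es ++ [e], hw.append ⟨rfl, rfl⟩, fun x hx => ?_⟩
  rcases List.mem_append.mp hx with hx | hx
  exacts [hes x hx, List.mem_singleton.mp hx ▸ he]

theorem exists_isPathIn_of_mem_reach (hb : b ∈ D.reach F a) : ∃ p, D.IsPathIn F a b p :=
  let ⟨_, hw, hes⟩ := hb
  hw.exists_isPathIn hes

noncomputable def incidence (D : Digraph' V E) (e : E) (w : V) : ℤ :=
  (if D.head e = w then 1 else 0) - (if D.tail e = w then 1 else 0)

noncomputable def excess (D : Digraph' V E) (S : Finset E) (w : V) : ℤ :=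
  ∑ e ∈ S, D.incidence e w

theorem IsWalk.sum_incidence {es : List E} (hw : D.IsWalk a b es) (w : V) :
    (es.map (D.incidence · w)).sum = (if b = w then 1 else 0) - (if a = w then 1 else 0) := by
  induction es generalizing a with
  | nil => cases hw; simp
  | cons e es ih =>
    rw [List.map_cons, List.sum_cons, ih hw.2, incidence, hw.1]
    ring

theorem IsPathIn.excess {p : List E} (hp : D.IsPathIn F a b p) (w : V) :
    D.excess p.toFinset w = (if b = w then 1 else 0) - (if a = w then 1 else 0) := by
  rw [Digraph'.excess, List.sum_toFinset _ hp.nodup, hp.1.sum_incidence]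

def IsPathFamily (D : Digraph' V E) (F : Set E) (a b : V) (P : List (List E)) : Prop :=
  (∀ p ∈ P, D.IsPathIn F a b p) ∧ EdgeDisjoint P

theorem IsPathFamily.mono (hP : D.IsPathFamily F a b P) (hFG : F ⊆ G) :
    D.IsPathFamily G a b P :=
  ⟨fun p hp => (hP.1 p hp).mono hFG, hP.2⟩

theorem IsPathFamily.nodup_flatten (hP : D.IsPathFamily F a b P) : P.flatten.Nodup :=
  List.nodup_flatten.mpr ⟨fun p hp => (hP.1 p hp).nodup, hP.2.imp fun h _ he he' => h _ he he'⟩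

theorem IsPathFamily.flatten_subset (hP : D.IsPathFamily F a b P) :
    (P.flatten.toFinset : Set E) ⊆ F := by
  intro e he
  obtain ⟨p, hp, hep⟩ := List.mem_flatten.mp (List.mem_toFinset.mp he)
  exact (hP.1 p hp).2.1 e hep

theorem IsPathFamily.excess (hP : D.IsPathFamily F a b P) (w : V) :
    D.excess P.flatten.toFinset w =
      P.length * ((if b = w then 1 else 0) - (if a = w then 1 else 0)) := by
  have hpath (p : List E) (hp : p ∈ P) := (hP.1 p hp).1.sum_incidence w
  rw [Digraph'.excess, List.sum_toFinset _ hP.nodup_flatten, List.map_flatten, List.sum_flatten,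
    List.map_map, Function.comp_def, List.map_congr_left hpath, List.map_const',
    List.sum_replicate, nsmul_eq_mul]

/-- The residual digraph: `Sum.inl e` traverses `e` forwards, `Sum.inr e` backwards. -/
def residual (D : Digraph' V E) : Digraph' V (E ⊕ E) :=
  ⟨Sum.elim D.tail D.head, Sum.elim D.head D.tail⟩

/-- Residual edges of a flow `S` inside `F`: unused edges of `F` forwards, used ones backwards. -/
def residualEdges (F : Set E) (S : Finset E) : Set (E ⊕ E) :=
  {x | Sum.elim (fun e => e ∈ F ∧ e ∉ S) (· ∈ S) x}

theorem residual_incidence_inl (e : E) (w : V) :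
    D.residual.incidence (Sum.inl e) w = D.incidence e w :=
  rfl

theorem residual_incidence_inr (e : E) (w : V) :
    D.residual.incidence (Sum.inr e) w = -D.incidence e w := by
  by_cases D.tail e = w <;> by_cases D.head e = w <;> simp_all [incidence, residual]

theorem exists_excess_eq_of_isPathIn_residual {S : Finset E} {p : List (E ⊕ E)}
    (hSF : (S : Set E) ⊆ F) (hp : D.residual.IsPathIn (residualEdges F S) a b p) :
    ∃ S' : Finset E, (S' : Set E) ⊆ F ∧ ∀ w,
      D.excess S' w = D.excess S w + ((if b = w then 1 else 0) - (if a = w then 1 else 0)) := by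
  set A := p.toFinset.toLeft
  set B := p.toFinset.toRight
  have hA (e : E) (he : e ∈ A) : e ∈ F ∧ e ∉ S :=
    hp.2.1 _ (List.mem_toFinset.mp (mem_toLeft.mp he))
  have hBS : B ⊆ S := fun e he => hp.2.1 _ (List.mem_toFinset.mp (mem_toRight.mp he))
  have hdisj : Disjoint (S \ B) A :=
    disjoint_left.mpr fun e he heA => (hA e heA).2 (mem_sdiff.mp he).1
  refine ⟨(S \ B) ∪ A, ?_, fun w => ?_⟩
  · intro e he
    rcases mem_union.mp he with he | he
    exacts [hSF (mem_sdiff.mp he).1, (hA e he).1]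
  · have hpath := hp.1.sum_incidence w
    rw [← List.sum_toFinset _ hp.nodup, ← toLeft_disjSum_toRight (u := p.toFinset),
      sum_disjSum] at hpath
    simp only [residual_incidence_inl, residual_incidence_inr, sum_neg_distrib] at hpath
    rw [excess, sum_union hdisj, sum_sdiff_eq_sub hBS, ← hpath]
    simp only [excess, A, B]
    ring

variable [Fintype E]

noncomputable def leaving (D : Digraph' V E) (F : Set E) (W : Set V) : Finset E :=
  {e | e ∈ F ∧ D.tail e ∈ W ∧ D.head e ∉ W}

theorem leaving_mono (hFG : F ⊆ G) (W : Set V) : D.leaving F W ⊆ D.leaving G W := by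
  intro e he
  simp only [leaving, mem_filter, mem_univ, true_and] at he ⊢
  exact ⟨hFG he.1, he.2⟩

theorem leaving_eq_leaving_univ {W : Set V} (h : ∀ e ∉ F, D.tail e ∈ W → D.head e ∈ W) :
    D.leaving F W = D.leaving Set.univ W := by
  ext e
  simp only [leaving, mem_filter, mem_univ, true_and, Set.mem_univ]
  exact ⟨fun he => he.2, fun he => ⟨by_contra fun hF => he.2 (h e hF he.1), he⟩⟩

theorem leaving_coe (S : Finset E) (W : Set V) :
    D.leaving S W = S.filter fun e => D.tail e ∈ W ∧ D.head e ∉ W := by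
  ext e
  simp [leaving]

theorem card_leaving_union_add_card_leaving_inter_le (F : Set E) (W X : Set V) :
    #(D.leaving F (W ∪ X)) + #(D.leaving F (W ∩ X)) ≤
      #(D.leaving F W) + #(D.leaving F X) := by
  rw [← card_union_add_card_inter, ← card_union_add_card_inter (D.leaving F W)]
  refine add_le_add (card_le_card fun e he => ?_) (card_le_card fun e he => ?_) <;>
    simp only [leaving, mem_union, mem_inter, mem_filter, mem_univ, true_and, Set.mem_union,
      Set.mem_inter_iff] at he ⊢ <;>
    tauto

theorem IsPathFamily.length_le_card (hP : D.IsPathFamily F a b P) (hab : a ≠ b) :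
    P.length ≤ Fintype.card E :=
  calc P.length = (P.map List.length).length := (List.length_map _).symm
    _ ≤ P.flatten.length := by
      rw [List.length_flatten]
      refine List.length_le_sum_of_one_le _ fun n hn => ?_
      obtain ⟨p, hp, rfl⟩ := List.mem_map.mp hn
      exact List.length_pos_iff.mpr ((hP.1 p hp).ne_nil hab)
    _ ≤ Fintype.card E := hP.nodup_flatten.length_le_card

theorem bddAbove_pathFamily_lengths (hab : a ≠ b) :
    BddAbove {k | ∃ P, P.length = k ∧ D.IsPathFamily F a b P} :=
  ⟨Fintype.card E, by rintro _ ⟨P, rfl, hP⟩; exact hP.length_le_card hab⟩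

theorem IsPathFamily.length_le_lam (hP : D.IsPathFamily F a b P) (hab : a ≠ b) :
    P.length ≤ D.lam F a b :=
  le_csSup (bddAbove_pathFamily_lengths hab) ⟨P, rfl, hP⟩

theorem exists_isPathFamily_length_eq_lam (hab : a ≠ b) :
    ∃ P, D.IsPathFamily F a b P ∧ P.length = D.lam F a b := by
  obtain ⟨P, hlen, hP⟩ :=
    Nat.sSup_mem (s := {k | ∃ P, P.length = k ∧ D.IsPathFamily F a b P})
      ⟨0, [], rfl, by simp, List.Pairwise.nil⟩ (bddAbove_pathFamily_lengths hab)
  exact ⟨P, hP, hlen⟩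

variable [Fintype V] {W : Set V}

/-- `D.leaving S Wᶜ` is the set of edges of `S` entering `W`. -/
theorem sum_excess_compl (S : Finset E) (W : Set V) :
    ∑ w with w ∉ W, D.excess S w = #(D.leaving S W) - #(D.leaving S Wᶜ) := by
  have hinc (e : E) : ∑ w with w ∉ W, D.incidence e w =
      (if D.tail e ∈ W ∧ D.head e ∉ W then 1 else 0) -
        (if D.tail e ∈ Wᶜ ∧ D.head e ∉ Wᶜ then 1 else 0) := by
    simp only [incidence, sum_sub_distrib, sum_ite_eq, mem_filter, mem_univ, true_and,
      Set.mem_compl_iff, not_not]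
    by_cases D.tail e ∈ W <;> by_cases D.head e ∈ W <;> simp_all
  simp only [excess, leaving_coe]
  rw [sum_comm, sum_congr rfl fun e _ => hinc e, sum_sub_distrib, sum_boole, sum_boole]
  congr!

theorem IsPathFamily.card_leaving (hP : D.IsPathFamily F a b P) (ha : a ∈ W) (hb : b ∉ W) :
    (#(D.leaving P.flatten.toFinset W) : ℤ) =
      P.length + #(D.leaving P.flatten.toFinset Wᶜ) := by
  have h := D.sum_excess_compl P.flatten.toFinset W
  simp only [hP.excess, ← mul_sum, sum_sub_distrib, sum_ite_eq, mem_filter, mem_univ,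
    true_and, hb, ha, not_false_eq_true, not_true_eq_false, if_true,
    if_false] at h
  linarith

theorem IsPathFamily.length_le_card_leaving (hP : D.IsPathFamily F a b P) (ha : a ∈ W)
    (hb : b ∉ W) : P.length ≤ #(D.leaving F W) := by
  have h := hP.card_leaving ha hb
  have := card_le_card (leaving_mono (D := D) hP.flatten_subset W)
  omega

theorem IsPathFamily.leaving_subset (hP : D.IsPathFamily F a b P) (ha : a ∈ W) (hb : b ∉ W)
    (hW : #(D.leaving F W) ≤ P.length) : D.leaving F W ⊆ P.flatten.toFinset := by
  have h := hP.card_leaving ha hb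
  rw [← eq_of_subset_of_card_le (leaving_mono (D := D) hP.flatten_subset W) (by omega)]
  intro e he
  simp only [leaving, mem_filter] at he
  simpa using he.2.1

/-- If `t` were unreachable, the unreachable vertices would have positive total excess although no
edge of `S` enters them. -/
theorem mem_reach_of_excess {S : Finset E} {t : V} (hS : ∀ w, w ≠ a → 0 ≤ D.excess S w)
    (ht : 0 < D.excess S t) : t ∈ D.reach S a := by
  by_contra htR
  have hsum := D.sum_excess_compl S (D.reach S a)
  have hclosed : D.leaving S (D.reach S a) = ∅ := by
    ext e
    simp only [leaving, mem_filter, mem_univ, true_and, notMem_empty, iff_false, not_and, not_not]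
    exact fun he => head_mem_reach he
  have hle : D.excess S t ≤ ∑ w with w ∉ D.reach S a, D.excess S w :=
    single_le_sum (fun w hw => hS w (by rintro rfl; simp [self_mem_reach] at hw)) (by simpa)
  rw [hclosed, card_empty] at hsum
  omega

theorem exists_isPathFamily_of_excess (hab : a ≠ b) (n : ℕ) (S : Finset E)
    (hS : ∀ w, D.excess S w = n * ((if b = w then 1 else 0) - (if a = w then 1 else 0))) :
    ∃ P, D.IsPathFamily S a b P ∧ P.length = n := by
  induction n generalizing S with
  | zero => exact ⟨[], ⟨by simp, List.Pairwise.nil⟩, rfl⟩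
  | succ n ih =>
    have hb : b ∈ D.reach S a := mem_reach_of_excess
      (fun w hw => by rw [hS, if_neg (Ne.symm hw)]; split_ifs <;> omega)
      (by rw [hS, if_pos rfl, if_neg hab]; omega)
    obtain ⟨p, hp⟩ := exists_isPathIn_of_mem_reach hb
    have hpS : p.toFinset ⊆ S := fun e he => hp.2.1 e (List.mem_toFinset.mp he)
    obtain ⟨P, hP, hlen⟩ := ih (S \ p.toFinset) fun w => by
      rw [excess, sum_sdiff_eq_sub hpS, ← excess, ← excess, hS, hp.excess]
      push_cast
      ring
    refine ⟨p :: P, ⟨?_, ?_⟩, by simp [hlen]⟩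
    · intro q hq
      rcases List.mem_cons.mp hq with rfl | hq
      exacts [hp, (hP.1 q hq).mono (by simp)]
    · refine List.pairwise_cons.mpr ⟨fun q hq e hep heq => ?_, hP.2⟩
      have := (hP.1 q hq).2.1 e heq
      simp_all

theorem IsPathFamily.notMem_reach_residual {Q : List (List E)} (hQ : D.IsPathFamily F a b Q)
    (hmax : Q.length = D.lam F a b) (hab : a ≠ b) :
    b ∉ D.residual.reach (residualEdges F Q.flatten.toFinset) a := by
  intro hb
  obtain ⟨p, hp⟩ := exists_isPathIn_of_mem_reach hb
  obtain ⟨S, hSF, hS⟩ := exists_excess_eq_of_isPathIn_residual hQ.flatten_subset hp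
  obtain ⟨P, hP, hlen⟩ := exists_isPathFamily_of_excess hab (Q.length + 1) S fun w => by
    rw [hS, hQ.excess]
    push_cast
    ring
  have := (hP.mono hSF).length_le_lam hab
  omega

/-- Menger's theorem. The cut is the set of vertices reachable from `a` in the residual digraph of
a maximum family of paths. -/
theorem exists_card_leaving_eq_lam (hab : a ≠ b) :
    ∃ W, a ∈ W ∧ b ∉ W ∧ #(D.leaving F W) = D.lam F a b := by
  obtain ⟨Q, hQ, hlen⟩ := exists_isPathFamily_length_eq_lam (D := D) (F := F) hab
  set U := Q.flatten.toFinset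
  set W := D.residual.reach (residualEdges F U) a
  have hbW : b ∉ W := hQ.notMem_reach_residual hlen hab
  have hforward : D.leaving F W ⊆ D.leaving U W := by
    intro e he
    simp only [leaving, mem_filter, mem_univ, true_and, mem_coe] at he ⊢
    refine ⟨by_contra fun heU => he.2.2 ?_, he.2⟩
    exact head_mem_reach (D := D.residual) (e := Sum.inl e) ⟨he.1, heU⟩ he.2.1
  have hbackward : D.leaving U Wᶜ = ∅ := by
    ext e
    simp only [leaving, mem_filter, mem_univ, true_and, mem_coe, Set.mem_compl_iff, not_not,
      notMem_empty, iff_false, not_and]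
    exact fun heU htW hhW => htW (head_mem_reach (D := D.residual) (e := Sum.inr e) heU hhW)
  have hcut : (#(D.leaving U W) : ℤ) = Q.length + #(D.leaving U Wᶜ) :=
    hQ.card_leaving self_mem_reach hbW
  rw [hbackward, card_empty] at hcut
  have := card_le_card hforward
  have : Q.length ≤ #(D.leaving F W) := hQ.length_le_card_leaving self_mem_reach hbW
  exact ⟨W, self_mem_reach, hbW, by omega⟩

theorem lam_le_card_leaving_of_tight_cut {r u v : V} {X : Set V} (hP : D.IsPathFamily F r v P)
    (hrX : r ∈ X) (hvX : v ∉ X) (hX : #(D.leaving Set.univ X) ≤ P.length)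
    (hF : ∀ e ∉ F, D.head e = v ∧ D.tail e ∉ X) (hrW : r ∈ W) (huW : u ∉ W) :
    D.lam Set.univ r u ≤ #(D.leaving F W) := by
  obtain ⟨Q, hQ, hlen⟩ :=
    exists_isPathFamily_length_eq_lam (D := D) (F := Set.univ) fun h : r = u => huW (h ▸ hrW)
  rw [← hlen]
  by_cases hvW : v ∈ W
  · rw [leaving_eq_leaving_univ fun e he _ => (hF e he).1 ▸ hvW]
    exact hQ.length_le_card_leaving hrW huW
  · have hunion := hP.length_le_card_leaving (W := W ∪ X) (Or.inl hrW) (by simp [hvW, hvX])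
    have hinter := hQ.length_le_card_leaving (W := W ∩ X) ⟨hrW, hrX⟩ fun h => huW h.1
    rw [← leaving_eq_leaving_univ fun e he h => absurd h.2 (hF e he).2] at hinter
    have hXF := card_le_card (leaving_mono (D := D) (Set.subset_univ F) X)
    have := card_leaving_union_add_card_leaving_inter_le (D := D) F W X
    omega

end Digraph'

open Digraph' in
/-- Deleting the in-edges of `v` unused by a maximum family of pairwise
edge-disjoint `r → v` paths does not reduce any local edge-connectivity from `r`. -/
theorem stmt7 {V E : Type} [Fintype V] [Fintype E] (D : Digraph' V E) (r v : V)
    (hr : ∀ e, D.head e ≠ r) (P : List (List E))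
    (hP : ∀ p ∈ P, D.IsPathIn Set.univ r v p) (hdisj : Digraph'.EdgeDisjoint P)
    (hmax : P.length = D.lam Set.univ r v) :
    ∀ u, u ≠ r →
      D.lam Set.univ r u ≤ D.lam {e | D.head e = v → ∃ p ∈ P, e ∈ p} r u := by
  intro u hu
  set F : Set E := {e | D.head e = v → ∃ p ∈ P, e ∈ p}
  by_cases hrv : r = v
  · have hF : F = Set.univ := Set.eq_univ_of_forall fun e he => absurd (hrv ▸ he) (hr e)
    rw [hF]
  obtain ⟨X, hrX, hvX, hX⟩ := exists_card_leaving_eq_lam (D := D) (F := Set.univ) hrv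
  have hXP : (D.leaving Set.univ X).card ≤ P.length := (hX.trans hmax.symm).le
  have hsat := IsPathFamily.leaving_subset ⟨hP, hdisj⟩ hrX hvX hXP
  obtain ⟨W, hrW, huW, hW⟩ := exists_card_leaving_eq_lam (D := D) (F := F) (Ne.symm hu)
  rw [← hW]
  refine lam_le_card_leaving_of_tight_cut (P := P) ⟨fun p hp => ?_, hdisj⟩ hrX hvX hXP
    (fun e he => ?_) hrW huW
  · exact ⟨(hP p hp).1, fun e he _ => ⟨p, hp, he⟩, (hP p hp).2.2⟩
  · simp only [F, Set.mem_ofPred_eq, Classical.not_imp, not_exists, not_and] at he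
    refine ⟨he.1, fun htX => ?_⟩
    have heX : e ∈ D.leaving Set.univ X := by simp [leaving, htX, he.1, hvX]
    obtain ⟨p, hp, hep⟩ := List.mem_flatten.mp (List.mem_toFinset.mp (hsat heX))
    exact he.2 p hp hep
end

section
/- Let D be a finite digraph with root r having no in-edges, and let f₀ ⊇ f₁ ⊇ ⋯ be constructed as follows: f₀ = c, and for k < n, f_{k+1} agrees with f_k except on the in-edges of v_{k+1}, where it equals an r→v_{k+1} flow z_{k+1} ≤ f_k of maximum amount. Then λ_{f_k}(v) = λ_c(v) for every k ≤ n and every v ∈ V−r. -/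
attribute [local instance] Classical.propDecidable

/-! Replacing the capacities on the in-edges of `v` by a maximum `r → v` flow `z` only lowers
capacities, so no connectivity grows. Conversely fix `u`, a minimum `r → u` cut `B` for the new
capacities `g'` and a minimum `r → v` cut `A` for the old ones `g`; being maximum, `z` saturates
every edge entering `A`. If `v ∉ B`, then `g` and `g'` agree on the edges entering `B`. Otherwise,
since `z` is an `r → v` flow through the cut `A ∩ B` and the in-capacity `ρ` is submodular,
`λ_g(u) ≤ ρ_g(A ∪ B) = ρ_g'(A ∪ B) ≤ ρ_g'(A) + ρ_g'(B) - ρ_g'(A ∩ B) ≤ val z + λ_g'(u) - val z`.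

Minimum cuts come from max-flow min-cut: a maximum flow exists by compactness, and the vertices
that cannot be reached from `r` along an augmenting direction form a cut that it saturates. -/

theorem Convex.add_smul_mem_of_le {𝕜 F : Type*} [Field 𝕜] [LinearOrder 𝕜] [IsStrictOrderedRing 𝕜]
    [AddCommGroup F] [Module 𝕜 F] {S : Set F} (hS : Convex 𝕜 S) {x p : F} {ε δ : 𝕜} (hx : x ∈ S)
    (hε : x + ε • p ∈ S) (hε0 : 0 < ε) (hδ0 : 0 ≤ δ) (hδ : δ ≤ ε) : x + δ • p ∈ S := by
  have := hS.add_smul_mem hx hε ⟨div_nonneg hδ0 hε0.le, (div_le_one hε0).2 hδ⟩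
  rwa [smul_smul, div_mul_cancel₀ _ hε0.ne'] at this

namespace Digraph'

variable {V E : Type} [Fintype E] {D : Digraph' V E}

section Algebra

variable (D)

lemma inflow_add (x y : E → ℝ) (v : V) : D.inflow (x + y) v = D.inflow x v + D.inflow y v := by
  simp only [inflow, ← Finset.sum_add_distrib, Pi.add_apply, ite_add_ite, add_zero]

lemma outflow_add (x y : E → ℝ) (v : V) :
    D.outflow (x + y) v = D.outflow x v + D.outflow y v := by
  simp only [outflow, ← Finset.sum_add_distrib, Pi.add_apply, ite_add_ite, add_zero]

lemma inflow_smul (a : ℝ) (x : E → ℝ) (v : V) : D.inflow (a • x) v = a * D.inflow x v := by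
  simp only [inflow, Finset.mul_sum, Pi.smul_apply, smul_eq_mul, mul_ite, mul_zero]

lemma outflow_smul (a : ℝ) (x : E → ℝ) (v : V) : D.outflow (a • x) v = a * D.outflow x v := by
  simp only [outflow, Finset.mul_sum, Pi.smul_apply, smul_eq_mul, mul_ite, mul_zero]

lemma inflow_single (e : E) (a : ℝ) (v : V) :
    D.inflow (Pi.single e a) v = if D.head e = v then a else 0 := by
  rw [inflow, Finset.sum_eq_single e] <;> simp +contextual

lemma outflow_single (e : E) (a : ℝ) (v : V) :
    D.outflow (Pi.single e a) v = if D.tail e = v then a else 0 := by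
  rw [outflow, Finset.sum_eq_single e] <;> simp +contextual

lemma continuous_inflow (v : V) : Continuous fun x : E → ℝ => D.inflow x v :=
  continuous_finsetSum _ fun e _ => (continuous_apply e).if_const _ continuous_const

lemma continuous_outflow (v : V) : Continuous fun x : E → ℝ => D.outflow x v :=
  continuous_finsetSum _ fun e _ => (continuous_apply e).if_const _ continuous_const

lemma sum_inflow_sub_outflow [Fintype V] (x : E → ℝ) (W : Set V) :
    ∑ w ∈ W.toFinset, (D.inflow x w - D.outflow x w) = D.rhoSet x W - D.rhoSet x Wᶜ := by
  simp only [inflow, outflow, rhoSet, ← Finset.sum_sub_distrib]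
  rw [Finset.sum_comm]
  refine Finset.sum_congr rfl fun e _ => ?_
  rw [Finset.sum_sub_distrib, Finset.sum_ite_eq, Finset.sum_ite_eq]
  by_cases D.head e ∈ W <;> by_cases D.tail e ∈ W <;> simp [*]

lemma rhoSet_mono {x y : E → ℝ} (h : x ≤ y) (W : Set V) : D.rhoSet x W ≤ D.rhoSet y W :=
  Finset.sum_le_sum fun e _ => by split_ifs <;> simp [h e]

lemma rhoSet_nonneg {x : E → ℝ} (hx : 0 ≤ x) (W : Set V) : 0 ≤ D.rhoSet x W := by
  simpa [rhoSet] using D.rhoSet_mono hx W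

lemma rhoSet_congr {x y : E → ℝ} {W : Set V}
    (h : ∀ e, D.tail e ∉ W → D.head e ∈ W → x e = y e) : D.rhoSet x W = D.rhoSet y W :=
  Finset.sum_congr rfl fun e _ => by
    split_ifs with he
    exacts [h e he.2 he.1, rfl]

lemma rhoSet_union_add_rhoSet_inter_le {x : E → ℝ} (hx : 0 ≤ x) (A B : Set V) :
    D.rhoSet x (A ∪ B) + D.rhoSet x (A ∩ B) ≤ D.rhoSet x A + D.rhoSet x B := by
  simp only [rhoSet, ← Finset.sum_add_distrib]
  refine Finset.sum_le_sum fun e _ => ?_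
  have : 0 ≤ x e := hx e
  by_cases D.head e ∈ A <;> by_cases D.head e ∈ B <;> by_cases D.tail e ∈ A <;>
    by_cases D.tail e ∈ B <;> simp [*]

end Algebra

section Flow

variable {r t : V} {x cc : E → ℝ}

lemma IsFlow.apply_eq_zero_of_head_eq (hx : D.IsFlow r t x) {e : E} (he : D.head e = r) :
    x e = 0 := by
  have h := hx.2.2.1
  rw [inflow, Finset.sum_eq_zero_iff_of_nonneg fun e _ => by split_ifs <;> simp [hx.1 e]] at h
  simpa [he] using h e (Finset.mem_univ e)

lemma IsFlow.apply_eq_zero_of_tail_eq (hx : D.IsFlow r t x) {e : E} (he : D.tail e = t) :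
    x e = 0 := by
  have h := hx.2.2.2
  rw [outflow, Finset.sum_eq_zero_iff_of_nonneg fun e _ => by split_ifs <;> simp [hx.1 e]] at h
  simpa [he] using h e (Finset.mem_univ e)

variable [Fintype V] {W : Set V}

lemma IsFlow.outflow_eq_rhoSet_sub (hx : D.IsFlow r t x) (htW : t ∈ W) (hrW : r ∉ W) :
    D.outflow x r = D.rhoSet x W - D.rhoSet x Wᶜ := by
  have hsum := D.sum_inflow_sub_outflow x Wᶜ
  rw [compl_compl, Finset.sum_eq_single_of_mem r (by simpa using hrW), hx.2.2.1] at hsum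
  · linarith
  · intro w hw hwr
    have hwt : w ≠ t := fun h => by simp_all
    rw [hx.2.1 w hwr hwt, sub_self]

lemma IsFlow.outflow_le_rhoSet (hx : D.IsFlow r t x) (hxc : x ≤ cc) (htW : t ∈ W)
    (hrW : r ∉ W) : D.outflow x r ≤ D.rhoSet cc W := by
  rw [hx.outflow_eq_rhoSet_sub htW hrW]
  linarith [D.rhoSet_mono hxc W, D.rhoSet_nonneg hx.1 Wᶜ]

lemma IsFlow.apply_eq_of_outflow_eq_rhoSet (hx : D.IsFlow r t x) (hxc : x ≤ cc) (htW : t ∈ W)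
    (hrW : r ∉ W) (heq : D.outflow x r = D.rhoSet cc W) {e : E} (hte : D.tail e ∉ W)
    (hhe : D.head e ∈ W) : x e = cc e := by
  have hle : ∀ e ∈ Finset.univ, (if D.head e ∈ W ∧ D.tail e ∉ W then x e else 0) ≤
      if D.head e ∈ W ∧ D.tail e ∉ W then cc e else 0 := fun e _ => by
    split_ifs <;> simp [hxc e]
  have hsum : D.rhoSet x W = D.rhoSet cc W := by
    rw [hx.outflow_eq_rhoSet_sub htW hrW] at heq
    linarith [D.rhoSet_mono hxc W, D.rhoSet_nonneg hx.1 Wᶜ]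
  simpa [hhe, hte] using (Finset.sum_eq_sum_iff_of_le hle).1 hsum e (Finset.mem_univ e)

end Flow

section MaxFlow

variable (D) in
def IsMaxFlow (r t : V) (cc x : E → ℝ) : Prop :=
  D.IsFlow r t x ∧ x ≤ cc ∧ ∀ y, D.IsFlow r t y → y ≤ cc → D.outflow y r ≤ D.outflow x r

variable {r t : V} {cc x : E → ℝ}

variable (D) in
lemma isClosed_setOf_isFlow (r t : V) : IsClosed {x | D.IsFlow r t x} := by
  simp only [IsFlow, Set.ofPred_and, Set.ofPred_forall]
  exact (isClosed_iInter fun e => isClosed_le continuous_const (continuous_apply e)).inter <|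
    (isClosed_iInter fun u => isClosed_iInter fun _ => isClosed_iInter fun _ =>
      isClosed_eq (D.continuous_inflow u) (D.continuous_outflow u)).inter <|
    (isClosed_eq (D.continuous_inflow r) continuous_const).inter
      (isClosed_eq (D.continuous_outflow t) continuous_const)

variable (D) in
lemma isFlow_zero (r t : V) : D.IsFlow r t 0 := by
  refine ⟨fun _ => le_rfl, fun u _ _ => ?_, ?_, ?_⟩ <;> simp [inflow, outflow]

variable (D) in
lemma exists_isMaxFlow (r t : V) (hcc : 0 ≤ cc) : ∃ x, D.IsMaxFlow r t cc x := by
  have hK : IsCompact ({x | D.IsFlow r t x} ∩ Set.Iic cc) :=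
    isCompact_Icc.of_isClosed_subset ((D.isClosed_setOf_isFlow r t).inter isClosed_Iic)
      fun x hx => ⟨hx.1.1, hx.2⟩
  obtain ⟨x, hx, hmax⟩ :=
    hK.exists_isMaxOn ⟨0, D.isFlow_zero r t, hcc⟩ (D.continuous_outflow r).continuousOn
  exact ⟨x, hx.1, hx.2, fun y hy hyc => hmax ⟨hy, hyc⟩⟩

lemma IsMaxFlow.lamF_eq (hx : D.IsMaxFlow r t cc x) : D.lamF r t cc = D.outflow x r :=
  IsGreatest.csSup_eq ⟨⟨x, hx.1, hx.2.1, rfl⟩, by rintro _ ⟨y, hy, hyc, rfl⟩; exact hx.2.2 y hy hyc⟩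

lemma outflow_le_lamF (hcc : 0 ≤ cc) (hx : D.IsFlow r t x) (hxc : x ≤ cc) :
    D.outflow x r ≤ D.lamF r t cc := by
  obtain ⟨y, hy⟩ := D.exists_isMaxFlow r t hcc
  exact hy.lamF_eq ▸ hy.2.2 x hx hxc

lemma lamF_mono {g g' : E → ℝ} (hg' : 0 ≤ g') (h : g' ≤ g) : D.lamF r t g' ≤ D.lamF r t g := by
  obtain ⟨x, hx⟩ := D.exists_isMaxFlow r t hg'
  exact hx.lamF_eq ▸ outflow_le_lamF (hg'.trans h) hx.1 (hx.2.1.trans h)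

lemma lamF_le_rhoSet [Fintype V] {W : Set V} (hcc : 0 ≤ cc) (htW : t ∈ W) (hrW : r ∉ W) :
    D.lamF r t cc ≤ D.rhoSet cc W := by
  obtain ⟨x, hx⟩ := D.exists_isMaxFlow r t hcc
  exact hx.lamF_eq ▸ hx.1.outflow_le_rhoSet hx.2.1 htW hrW

end MaxFlow

section Augmentation

variable (D) in
/-- Augmenting directions play the role of augmenting paths; unlike paths they concatenate
by plain addition (`IsAugmentingDir.add`), so reachability needs no path bookkeeping. -/
def IsAugmentingDir (r t : V) (cc x p : E → ℝ) (a b : V) : Prop :=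
  (∃ ε > (0 : ℝ), x + ε • p ∈ Set.Icc 0 cc) ∧ D.inflow p r = 0 ∧ D.outflow p t = 0 ∧
    ∀ u, D.inflow p u - D.outflow p u = (if u = b then 1 else 0) - (if u = a then 1 else 0)

variable {r t : V} {cc x p q : E → ℝ} {a b c : V}

lemma isAugmentingDir_zero (hx : x ∈ Set.Icc 0 cc) : D.IsAugmentingDir r t cc x 0 a a :=
  ⟨⟨1, one_pos, by simpa using hx⟩, by simp [inflow], by simp [outflow], fun u => by
    simp [inflow, outflow]⟩

lemma IsAugmentingDir.add (hx : x ∈ Set.Icc 0 cc) (hp : D.IsAugmentingDir r t cc x p a b)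
    (hq : D.IsAugmentingDir r t cc x q b c) : D.IsAugmentingDir r t cc x (p + q) a c := by
  obtain ⟨⟨ε, hε, hpε⟩, hpr, hpt, hpu⟩ := hp
  obtain ⟨⟨δ, hδ, hqδ⟩, hqr, hqt, hqu⟩ := hq
  have hmin : 0 < min ε δ := lt_min hε hδ
  have hp' := (convex_Icc 0 cc).add_smul_mem_of_le hx hpε hε hmin.le (min_le_left ε δ)
  have hq' := (convex_Icc 0 cc).add_smul_mem_of_le hx hqδ hδ hmin.le (min_le_right ε δ)
  refine ⟨⟨min ε δ / 2, half_pos hmin, ?_⟩, ?_, ?_, fun u => ?_⟩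
  · have := convex_Icc 0 cc hp' hq' (by norm_num : (0 : ℝ) ≤ 1 / 2)
      (by norm_num : (0 : ℝ) ≤ 1 / 2) (by norm_num)
    convert this using 1
    module
  · rw [inflow_add, hpr, hqr, add_zero]
  · rw [outflow_add, hpt, hqt, add_zero]
  · rw [inflow_add, outflow_add]
    linarith [hpu u, hqu u]

lemma IsFlow.isAugmentingDir_single (hx : D.IsFlow r t x) (hxc : x ≤ cc) {e : E}
    (ht : D.tail e ≠ t) (hr : D.head e ≠ r) (hlt : x e < cc e) :
    D.IsAugmentingDir r t cc x (Pi.single e 1) (D.tail e) (D.head e) := by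
  refine ⟨⟨cc e - x e, sub_pos.2 hlt, fun e' => ?_, fun e' => ?_⟩, ?_, ?_, fun u => ?_⟩
  · rcases eq_or_ne e' e with rfl | he
    · simpa using (hx.1 e').trans hlt.le
    · simpa [he] using hx.1 e'
  · rcases eq_or_ne e' e with rfl | he
    · simp
    · simpa [he] using hxc e'
  · simp [inflow_single, hr]
  · simp [outflow_single, ht]
  · simp [inflow_single, outflow_single, eq_comm]

lemma IsFlow.isAugmentingDir_neg_single (hx : D.IsFlow r t x) (hxc : x ≤ cc) {e : E}
    (hpos : 0 < x e) :
    D.IsAugmentingDir r t cc x (Pi.single e (-1)) (D.head e) (D.tail e) := by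
  refine ⟨⟨x e, hpos, fun e' => ?_, fun e' => ?_⟩, ?_, ?_, fun u => ?_⟩
  · rcases eq_or_ne e' e with rfl | he
    · simp
    · simpa [he] using hx.1 e'
  · rcases eq_or_ne e' e with rfl | he
    · simpa using (hx.1 e').trans (hxc e')
    · simpa [he] using hxc e'
  · simpa [inflow_single] using fun h => hpos.ne' (hx.apply_eq_zero_of_head_eq h)
  · simpa [outflow_single] using fun h => hpos.ne' (hx.apply_eq_zero_of_tail_eq h)
  · simp only [inflow_single, outflow_single, eq_comm (b := u)]
    split_ifs <;> norm_num

lemma IsMaxFlow.not_isAugmentingDir (hx : D.IsMaxFlow r t cc x) (htr : t ≠ r) :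
    ¬ D.IsAugmentingDir r t cc x p r t := by
  rintro ⟨⟨ε, hε, hbox⟩, hpr, hpt, hpu⟩
  have hflow : D.IsFlow r t (x + ε • p) := by
    refine ⟨hbox.1, fun u hur hut => ?_, ?_, ?_⟩
    · have := hpu u
      simp only [if_neg hur, if_neg hut, sub_zero] at this
      rw [inflow_add, outflow_add, inflow_smul, outflow_smul, hx.1.2.1 u hur hut]
      linear_combination ε * this
    · rw [inflow_add, inflow_smul, hx.1.2.2.1, hpr, mul_zero, add_zero]
    · rw [outflow_add, outflow_smul, hx.1.2.2.2, hpt, mul_zero, add_zero]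
  have hvalue : D.outflow p r = 1 := by
    have := hpu r
    simp only [if_neg htr.symm, if_true, hpr] at this
    linarith
  have := hx.2.2 _ hflow hbox.2
  rw [outflow_add, outflow_smul, hvalue] at this
  linarith

end Augmentation

section MinCut

variable [Fintype V] {r t : V} {cc x : E → ℝ}

lemma IsMaxFlow.exists_rhoSet_eq (hx : D.IsMaxFlow r t cc x) (htr : t ≠ r) :
    ∃ A : Set V, t ∈ A ∧ r ∉ A ∧ D.rhoSet cc A = D.outflow x r := by
  obtain ⟨hflow, hxc, -⟩ := id hx
  have hbox : x ∈ Set.Icc 0 cc := ⟨hflow.1, hxc⟩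
  set A : Set V := {w | ∀ p, ¬ D.IsAugmentingDir r t cc x p r w}
  have hrA : r ∉ A := fun h => h 0 (isAugmentingDir_zero hbox)
  have htA : t ∈ A := fun p => hx.not_isAugmentingDir htr
  have reach {w : V} (hw : w ∉ A) : ∃ p, D.IsAugmentingDir r t cc x p r w := by
    simpa [A] using hw
  have hsat (e : E) (hte : D.tail e ∉ A) (hhe : D.head e ∈ A) : x e = cc e := by
    obtain ⟨p, hp⟩ := reach hte
    exact (hxc e).eq_or_lt.resolve_right fun hlt => hhe _ <| hp.add hbox <|
      hflow.isAugmentingDir_single hxc (fun h => hte (h ▸ htA)) (fun h => hrA (h ▸ hhe)) hlt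
  have hzero (e : E) (hte : D.tail e ∈ A) (hhe : D.head e ∉ A) : x e = 0 := by
    obtain ⟨p, hp⟩ := reach hhe
    exact ((hflow.1 e).eq_or_lt.resolve_right fun hpos =>
      hte _ <| hp.add hbox <| hflow.isAugmentingDir_neg_single hxc hpos).symm
  refine ⟨A, htA, hrA, ?_⟩
  rw [hflow.outflow_eq_rhoSet_sub htA hrA, D.rhoSet_congr (y := cc) hsat,
    D.rhoSet_congr (y := 0) fun e hte hhe => hzero e (not_not.1 hte) hhe]
  simp [rhoSet]

lemma exists_rhoSet_eq_lamF (hcc : 0 ≤ cc) (htr : t ≠ r) :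
    ∃ A : Set V, t ∈ A ∧ r ∉ A ∧ D.rhoSet cc A = D.lamF r t cc := by
  obtain ⟨x, hx⟩ := D.exists_isMaxFlow r t hcc
  simpa only [hx.lamF_eq] using hx.exists_rhoSet_eq htr

end MinCut

theorem lamF_update_inEdges [Fintype V] {r u v : V} {g z : E → ℝ} (hv : v ≠ r) (hu : u ≠ r)
    (hz : D.IsFlow r v z) (hzg : z ≤ g) (hzmax : D.outflow z r = D.lamF r v g) :
    D.lamF r u (fun e => if D.head e = v then z e else g e) = D.lamF r u g := by
  set g' : E → ℝ := fun e => if D.head e = v then z e else g e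
  have hg : 0 ≤ g := fun e => (hz.1 e).trans (hzg e)
  have hg'g : g' ≤ g := fun e => by dsimp only [g']; split_ifs; exacts [hzg e, le_rfl]
  have hzg' : z ≤ g' := fun e => by dsimp only [g']; split_ifs; exacts [le_rfl, hzg e]
  have hg' : 0 ≤ g' := fun e => (hz.1 e).trans (hzg' e)
  obtain ⟨A, hvA, hrA, hA⟩ := D.exists_rhoSet_eq_lamF hg hv
  obtain ⟨B, huB, hrB, hB⟩ := D.exists_rhoSet_eq_lamF hg' hu
  have hsat (e : E) (hte : D.tail e ∉ A) (hhe : D.head e ∈ A) : z e = g e :=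
    hz.apply_eq_of_outflow_eq_rhoSet hzg hvA hrA (hzmax.trans hA.symm) hte hhe
  refine le_antisymm (lamF_mono hg' hg'g) ?_
  by_cases hvB : v ∈ B
  · have hunion : D.rhoSet g (A ∪ B) = D.rhoSet g' (A ∪ B) := by
      refine D.rhoSet_congr fun e hte hhe => ?_
      dsimp only [g']
      split_ifs with he
      exacts [(hsat e (fun h => hte (Or.inl h)) (he ▸ hvA)).symm, rfl]
    calc D.lamF r u g ≤ D.rhoSet g (A ∪ B) :=
          lamF_le_rhoSet hg (Or.inr huB) (by simp [hrA, hrB])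
      _ ≤ D.rhoSet g A + D.rhoSet g' B - D.outflow z r := by
          linarith [D.rhoSet_union_add_rhoSet_inter_le hg' A B, D.rhoSet_mono hg'g A,
            hz.outflow_le_rhoSet (W := A ∩ B) hzg' ⟨hvA, hvB⟩ fun h => hrA h.1]
      _ = D.lamF r u g' := by rw [hA, hB, hzmax]; ring
  · calc D.lamF r u g ≤ D.rhoSet g B := lamF_le_rhoSet hg huB hrB
      _ = D.lamF r u g' := hB ▸ D.rhoSet_congr fun e _ hhe => by
          simp only [g', if_neg fun h : D.head e = v => hvB (h ▸ hhe)]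

end Digraph'

open Digraph' in
theorem stmt9_general {V E : Type} [Fintype V] [Fintype E] (D : Digraph' V E)
    (n : ℕ) (venum : Fin (n + 1) → V)
    (hbij : Function.Bijective venum) (r : V) (hv0 : venum 0 = r)
    (c : E → ℝ)
    (f : Fin (n + 1) → E → ℝ) (z : Fin n → E → ℝ) (hf0 : f 0 = c)
    (hstep : ∀ k : Fin n,
      D.IsFlow r (venum k.succ) (z k) ∧ z k ≤ f k.castSucc ∧
      D.outflow (z k) r = D.lamF r (venum k.succ) (f k.castSucc) ∧
      f k.succ = fun e => if D.head e = venum k.succ then z k e else f k.castSucc e) :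
    ∀ k : Fin (n + 1), ∀ u, u ≠ r → D.lamF r u (f k) = D.lamF r u c := by
  intro k
  induction k using Fin.induction with
  | zero => intro u _; rw [hf0]
  | succ k ih =>
    intro u hu
    obtain ⟨hz, hzf, hzmax, hfk⟩ := hstep k
    have hv : venum k.succ ≠ r := hv0 ▸ hbij.1.ne (Fin.succ_ne_zero k)
    rw [hfk, D.lamF_update_inEdges hv hu hz hzf hzmax, ih u hu]

open Digraph' in
/-- The successive capacity vectors produced by the algorithm all preserve
every flow-connectivity from `r`. -/
theorem stmt9 {V E : Type} [Fintype V] [Fintype E] (D : Digraph' V E)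
    (hsimple : D.NoParallel) (n : ℕ) (venum : Fin (n + 1) → V)
    (hbij : Function.Bijective venum) (r : V) (hv0 : venum 0 = r)
    (hr : ∀ e, D.head e ≠ r) (c : E → ℝ) (hc : ∀ e, 0 ≤ c e)
    (f : Fin (n + 1) → E → ℝ) (z : Fin n → E → ℝ) (hf0 : f 0 = c)
    (hstep : ∀ k : Fin n,
      D.IsFlow r (venum k.succ) (z k) ∧ z k ≤ f k.castSucc ∧
      D.outflow (z k) r = D.lamF r (venum k.succ) (f k.castSucc) ∧
      f k.succ = fun e => if D.head e = venum k.succ then z k e else f k.castSucc e) :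
    ∀ k : Fin (n + 1), ∀ u, u ≠ r → D.lamF r u (f k) = D.lamF r u c :=
  stmt9_general D n venum hbij r hv0 c f z hf0 hstep
end

section
/- Let F be an r-flame subgraph of a digraph D and e ∈ E(D)\E(F) an edge with head v such that e is a coloop of the gammoid G_{F+e}(v) (i.e., I + e ∈ G_{F+e}(v) for every I ∈ G_F(v)). Then F + e is an r-flame. -/
attribute [local instance] Classical.propDecidable

/-!
The in-degree always bounds `λ`, since distinct edge-disjoint paths end in distinct in-edges;
so only `ϱ_{F+e}(w) ≤ λ_{F+e}(r,w)` needs proof. For `w ≠ v` the in-degree is unchanged and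
`λ` can only grow. At `w = v`, the last edges `I` of a maximum path system of `F` have
`|I| = λ_F(r,v) = ϱ_F(v)`, and the coloop hypothesis yields a path system of `F + e` with
`I + e` as last edges, giving `λ_{F+e}(r,v) ≥ ϱ_F(v) + 1 = ϱ_{F+e}(v)`.
-/

namespace Digraph'

variable {V E : Type} {D : Digraph' V E}

theorem IsWalk.head_eq_of_getLast? :
    ∀ {es : List E} {r v : V}, D.IsWalk r v es → ∀ {e}, es.getLast? = some e → D.head e = v
  | [], _, _, _, _, h => by simp at h
  | [_], _, _, hw, _, h => by
    obtain rfl : _ = _ := Option.some_injective _ h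
    exact hw.2
  | _ :: b :: es, _, _, hw, _, h => by
    rw [List.getLast?_cons_cons] at h
    exact IsWalk.head_eq_of_getLast? (es := b :: es) hw.2 h

theorem IsPathIn.mono_s12 {F F' : Set E} (h : F ⊆ F') {r v : V} {p : List E}
    (hp : D.IsPathIn F r v p) : D.IsPathIn F' r v p :=
  ⟨hp.1, fun e he => h (hp.2.1 e he), hp.2.2⟩

theorem IsPathIn.ne_nil_s12 {F : Set E} {r v : V} (hv : v ≠ r) {p : List E}
    (hp : D.IsPathIn F r v p) : p ≠ [] := by
  rintro rfl
  exact hv hp.1.symm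

def lastEdges (P : List (List E)) : Set E := {e | ∃ p ∈ P, p.getLast? = some e}

theorem lastEdges_eq_coe_toFinset [DecidableEq E] (P : List (List E)) :
    lastEdges P = ↑(P.filterMap List.getLast?).toFinset := by
  ext e
  simp [lastEdges]

theorem ncard_lastEdges_le (P : List (List E)) : (lastEdges P).ncard ≤ P.length := by
  classical
  rw [lastEdges_eq_coe_toFinset, Set.ncard_coe_finset]
  exact (List.toFinset_card_le _).trans (List.length_filterMap_le _ _)

variable {F : Set E} {r v : V} {P : List (List E)}

theorem lastEdges_subset_inEdges (hP : ∀ p ∈ P, D.IsPathIn F r v p) :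
    lastEdges P ⊆ D.inEdges F v := by
  rintro e ⟨p, hp, hlast⟩
  exact ⟨(hP p hp).2.1 e (List.mem_of_mem_getLast? hlast),
    IsWalk.head_eq_of_getLast? (hP p hp).1 hlast⟩

theorem ncard_lastEdges_eq_length (hv : v ≠ r) (hP : ∀ p ∈ P, D.IsPathIn F r v p)
    (hD : EdgeDisjoint P) : (lastEdges P).ncard = P.length := by
  classical
  have hlen : (P.filterMap List.getLast?).length = P.length := by
    rw [List.length_filterMap_eq_countP, List.countP_eq_length]
    exact fun p hp => List.getLast?_isSome.mpr ((hP p hp).ne_nil_s12 hv)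
  have hnodup : (P.filterMap List.getLast?).Nodup := by
    refine List.pairwise_filterMap.mpr (hD.imp ?_)
    rintro p q hpq a ha b hb rfl
    exact hpq a (List.mem_of_mem_getLast? ha) (List.mem_of_mem_getLast? hb)
  rw [lastEdges_eq_coe_toFinset, Set.ncard_coe_finset, List.toFinset_card_of_nodup hnodup,
    hlen]

theorem InGammoid.subset_inEdges {I : Set E} (hI : D.InGammoid F r v I) :
    I ⊆ D.inEdges F v := by
  obtain ⟨P, hP, -, rfl⟩ := hI
  exact lastEdges_subset_inEdges hP

theorem indeg_insert_of_head_ne {e : E} (h : D.head e ≠ v) :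
    D.indeg (insert e F) v = D.indeg F v := by
  have : D.inEdges (insert e F) v = D.inEdges F v := by
    ext f
    simp only [inEdges, Set.mem_ofPred_eq, Set.mem_insert_iff]
    exact ⟨fun ⟨hf, hfv⟩ => ⟨hf.resolve_left (by rintro rfl; exact h hfv), hfv⟩,
      fun ⟨hf, hfv⟩ => ⟨Or.inr hf, hfv⟩⟩
  rw [indeg, this, indeg]

variable [Finite E]

theorem length_le_indeg (hv : v ≠ r) (hP : ∀ p ∈ P, D.IsPathIn F r v p)
    (hD : EdgeDisjoint P) : P.length ≤ D.indeg F v :=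
  ncard_lastEdges_eq_length hv hP hD ▸
    Set.ncard_le_ncard (lastEdges_subset_inEdges hP) (Set.toFinite _)

theorem bddAbove_lamSet (hv : v ≠ r) :
    BddAbove {k | ∃ P : List (List E), P.length = k ∧ (∀ p ∈ P, D.IsPathIn F r v p) ∧
      EdgeDisjoint P} := by
  refine ⟨D.indeg F v, ?_⟩
  rintro k ⟨P, rfl, hP, hD⟩
  exact length_le_indeg hv hP hD

theorem le_lam (hv : v ≠ r) (hP : ∀ p ∈ P, D.IsPathIn F r v p) (hD : EdgeDisjoint P) :
    P.length ≤ D.lam F r v :=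
  le_csSup (bddAbove_lamSet hv) ⟨P, rfl, hP, hD⟩

theorem exists_length_eq_lam (hv : v ≠ r) :
    ∃ P : List (List E), P.length = D.lam F r v ∧ (∀ p ∈ P, D.IsPathIn F r v p) ∧
      EdgeDisjoint P := by
  refine Nat.sSup_mem ?_ (bddAbove_lamSet hv)
  exact ⟨0, [], rfl, by simp, List.Pairwise.nil⟩

theorem lam_le_indeg (hv : v ≠ r) : D.lam F r v ≤ D.indeg F v := by
  obtain ⟨P, hlen, hP, hD⟩ := exists_length_eq_lam (D := D) (F := F) hv
  exact hlen ▸ length_le_indeg hv hP hD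

theorem lam_mono {F' : Set E} (hv : v ≠ r) (h : F ⊆ F') : D.lam F r v ≤ D.lam F' r v := by
  obtain ⟨P, hlen, hP, hD⟩ := exists_length_eq_lam (D := D) (F := F) hv
  exact hlen ▸ le_lam hv (fun p hp => (hP p hp).mono_s12 h) hD

theorem InGammoid.ncard_le_lam {I : Set E} (hv : v ≠ r) (hI : D.InGammoid F r v I) :
    I.ncard ≤ D.lam F r v := by
  obtain ⟨P, hP, hD, rfl⟩ := hI
  exact (ncard_lastEdges_le P).trans (le_lam hv hP hD)

theorem exists_inGammoid_ncard_eq_lam (hv : v ≠ r) :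
    ∃ I, D.InGammoid F r v I ∧ I.ncard = D.lam F r v := by
  obtain ⟨P, hlen, hP, hD⟩ := exists_length_eq_lam (D := D) (F := F) hv
  exact ⟨lastEdges P, ⟨P, hP, hD, rfl⟩, (ncard_lastEdges_eq_length hv hP hD).trans hlen⟩

theorem indeg_insert_head {e : E} (he : e ∉ F) :
    D.indeg (insert e F) (D.head e) = D.indeg F (D.head e) + 1 := by
  have : D.inEdges (insert e F) (D.head e) = insert e (D.inEdges F (D.head e)) := by
    ext f
    simp only [inEdges, Set.mem_ofPred_eq, Set.mem_insert_iff]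
    constructor
    · rintro ⟨rfl | hf, hfv⟩
      exacts [Or.inl rfl, Or.inr ⟨hf, hfv⟩]
    · rintro (rfl | ⟨hf, hfv⟩)
      exacts [⟨Or.inl rfl, rfl⟩, ⟨Or.inr hf, hfv⟩]
  rw [indeg, this, Set.ncard_insert_of_notMem (fun h => he h.1), indeg]

end Digraph'

open Digraph' in
theorem stmt12_general {V E : Type} [Fintype E] (D : Digraph' V E) (r : V)
    (F : Set E) (hF : D.IsFlame r F)
    (e : E) (he : e ∉ F)
    (hcoloop : ∀ I : Set E, D.InGammoid F r (D.head e) I →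
      D.InGammoid (insert e F) r (D.head e) (insert e I)) :
    D.IsFlame r (insert e F) := by
  intro v hv
  refine le_antisymm ?_ (lam_le_indeg hv)
  by_cases hev : D.head e = v
  · subst hev
    obtain ⟨I, hI, hIcard⟩ := exists_inGammoid_ncard_eq_lam (D := D) (F := F) hv
    have heI : e ∉ I := fun h => he (hI.subset_inEdges h).1
    calc D.indeg (insert e F) (D.head e) = I.ncard + 1 := by
          rw [indeg_insert_head he, hF _ hv, hIcard]
      _ = (insert e I).ncard := (Set.ncard_insert_of_notMem heI).symm
      _ ≤ D.lam (insert e F) r (D.head e) := (hcoloop I hI).ncard_le_lam hv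
  · calc D.indeg (insert e F) v = D.indeg F v := indeg_insert_of_head_ne hev
      _ = D.lam F r v := hF v hv
      _ ≤ D.lam (insert e F) r v := lam_mono hv (Set.subset_insert e F)

open Digraph' in
/-- If `F` is an `r`-flame, `e ∉ F` has head `v`, and `e` is a coloop of the
gammoid `G_{F+e}(v)`, then `F + e` is an `r`-flame. -/
theorem stmt12 {V E : Type} [Fintype V] [Fintype E] (D : Digraph' V E) (r : V)
    (hr : ∀ e, D.head e ≠ r) (F : Set E) (hF : D.IsFlame r F)
    (e : E) (he : e ∉ F)
    (hcoloop : ∀ I : Set E, D.InGammoid F r (D.head e) I →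
      D.InGammoid (insert e F) r (D.head e) (insert e I)) :
    D.IsFlame r (insert e F) :=
  stmt12_general D r F hF e he hcoloop
end
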